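/- arXiv:2501.15131 — 2 statements merged into one kernel-verified Lean document; each statement's English description precedes it below -/
import Mathlib

section
/- Let A = FᵀF, let x ∈ ℝⁿ with A x ≠ 0, and let v ∈ ℝʳ satisfy vᵀF x = 0 and σ := 1 − vᵀF Fᵀv/(2(xᵀAx)^{1/2}) > 0. With H = 2I − (Fᵀv)(Fᵀv)ᵀ/(xᵀAx)^{1/2} and ∇f(x) = 2x − Ax/(xᵀAx)^{1/2}, the optimal decrease of the quadratic surrogate satisfies ∇f(x)ᵀ H⁻¹ ∇f(x) = (1/2)‖∇f(x)‖² + (vᵀF FᵀF x)² / (4σ (xᵀAx)^{3/2}). Consequently, over vectors v with vᵀF x = 0 and ‖v‖² = 1/ρ, maximizing the surrogate decrease min_d {∇f(x)ᵀd + (1/2)dᵀHd} is equivalent to maximizing the generalized Rayleigh quotient (vᵀB v)/(vᵀC v) with B = q qᵀ, q = F FᵀF x, and C = ρI − F Fᵀ/(2(xᵀAx)^{1/2}). -/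
/-!
Write `s = (xᵀAx)^{1/2}` and `u = Fᵀv`, so that `H = 2I − s⁻¹ u uᵀ` and `uᵀu = 2s(1 − σ)`.
Since `σ > 0`, Cauchy–Schwarz makes `H` positive definite, and Sherman–Morrison gives
`H⁻¹ = ½ (I + (2sσ)⁻¹ u uᵀ)`. Because `uᵀx = vᵀFx = 0`, the gradient pairs with `u` as
`uᵀ∇f(x) = −s⁻¹ vᵀq`, which yields the formula for `∇f(x)ᵀ H⁻¹ ∇f(x)`. Positive definiteness
makes `−H⁻¹∇f(x)` the minimiser of the surrogate, and on `‖v‖² = 1/ρ` one has `vᵀCv = σ` and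
`vᵀBv = (vᵀq)²`.
-/

open Matrix

/-- View a plain vector as an element of Euclidean space. -/
def toEuc {m : ℕ} (w : Fin m → ℝ) : EuclideanSpace ℝ (Fin m) := WithLp.toLp 2 w

lemma norm_toEuc_sq {m : ℕ} (w : Fin m → ℝ) : ‖toEuc w‖ ^ 2 = w ⬝ᵥ w := by
  rw [toEuc, EuclideanSpace.norm_eq, Real.sq_sqrt (by positivity)]
  simp [dotProduct, sq]

namespace Matrix

variable {ι : Type*} [Fintype ι]

theorem sq_dotProduct_le_dotProduct_self_mul {R : Type*} [CommRing R] [LinearOrder R]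
    [IsStrictOrderedRing R] (u w : ι → R) : (u ⬝ᵥ w) ^ 2 ≤ (u ⬝ᵥ u) * (w ⬝ᵥ w) := by
  simpa only [dotProduct, sq] using Finset.sum_mul_sq_le_sq_mul_sq Finset.univ u w

theorem dotProduct_vecMulVec_mulVec {R : Type*} [CommSemiring R] (y a b z : ι → R) :
    y ⬝ᵥ vecMulVec a b *ᵥ z = (y ⬝ᵥ a) * (b ⬝ᵥ z) := by
  rw [vecMulVec_mulVec, op_smul_eq_smul, dotProduct_smul, smul_eq_mul, mul_comm]

theorem dotProduct_transpose_mul_self_mulVec {κ R : Type*} [Fintype κ] [CommSemiring R]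
    (F : Matrix κ ι R) (x y : ι → R) : x ⬝ᵥ (Fᵀ * F) *ᵥ y = F *ᵥ x ⬝ᵥ F *ᵥ y := by
  rw [← mulVec_mulVec, dotProduct_mulVec, vecMul_transpose]

theorem dotProduct_transpose_mul_self_mulVec_pos {κ : Type*} [Fintype κ] {F : Matrix κ ι ℝ}
    {x : ι → ℝ} (hx : (Fᵀ * F) *ᵥ x ≠ 0) : 0 < x ⬝ᵥ (Fᵀ * F) *ᵥ x := by
  have hFx : F *ᵥ x ≠ 0 := fun h => hx (by rw [← mulVec_mulVec, h, mulVec_zero])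
  rw [dotProduct_transpose_mul_self_mulVec]
  simpa using dotProduct_star_self_pos_iff.mpr hFx

variable [DecidableEq ι]

theorem smul_one_sub_smul_vecMulVec_mul {K : Type*} [Field K] {a c : K} (u w : ι → K)
    (ha : a ≠ 0) (hd : a - c * (w ⬝ᵥ u) ≠ 0) :
    (a • 1 - c • vecMulVec u w) * (a⁻¹ • (1 + (c / (a - c * (w ⬝ᵥ u))) • vecMulVec u w)) = 1 := by
  have hP : vecMulVec u w * vecMulVec u w = (w ⬝ᵥ u) • vecMulVec u w := by
    rw [vecMulVec_mul_vecMulVec, vecMulVec_smul]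
  simp only [Matrix.sub_mul, Matrix.smul_mul, Matrix.mul_smul, Matrix.mul_add, Matrix.one_mul,
    Matrix.mul_one, hP]
  match_scalars
  · field_simp
  · field_simp
    ring

theorem dotProduct_inv_smul_one_sub_smul_vecMulVec_self_mulVec {K : Type*} [Field K] {a c : K}
    (u g : ι → K) (ha : a ≠ 0) (hd : a - c * (u ⬝ᵥ u) ≠ 0) :
    g ⬝ᵥ (a • 1 - c • vecMulVec u u)⁻¹ *ᵥ g
      = a⁻¹ * (g ⬝ᵥ g + c / (a - c * (u ⬝ᵥ u)) * (u ⬝ᵥ g) ^ 2) := by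
  rw [inv_eq_right_inv (smul_one_sub_smul_vecMulVec_mul u u ha hd), smul_mulVec, add_mulVec,
    one_mulVec, smul_mulVec, dotProduct_smul, dotProduct_add, dotProduct_smul,
    dotProduct_vecMulVec_mulVec, dotProduct_comm g u, smul_eq_mul, smul_eq_mul]
  ring

theorem posDef_smul_one_sub_smul_vecMulVec_self {a c : ℝ} (u : ι → ℝ) (hc : 0 ≤ c)
    (h : c * (u ⬝ᵥ u) < a) : (a • 1 - c • vecMulVec u u).PosDef := by
  refine PosDef.of_dotProduct_mulVec_pos ?_ fun w hw => ?_
  · simp [IsHermitian, conjTranspose_eq_transpose_of_trivial, transpose_vecMulVec]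
  · have hww : 0 < w ⬝ᵥ w := by
      simpa using dotProduct_star_self_pos_iff.mpr hw
    have hCS := sq_dotProduct_le_dotProduct_self_mul u w
    rw [star_trivial, sub_mulVec, smul_mulVec, one_mulVec, smul_mulVec, dotProduct_sub,
      dotProduct_smul, dotProduct_smul, dotProduct_vecMulVec_mulVec, dotProduct_comm w u,
      smul_eq_mul, smul_eq_mul]
    nlinarith [mul_le_mul_of_nonneg_left hCS hc]

theorem PosDef.neg_half_dotProduct_inv_mulVec_le {H : Matrix ι ι ℝ} (hH : H.PosDef)
    (g d : ι → ℝ) : -(1 / 2 * (g ⬝ᵥ H⁻¹ *ᵥ g)) ≤ g ⬝ᵥ d + 1 / 2 * (d ⬝ᵥ H *ᵥ d) := by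
  set z := H⁻¹ *ᵥ g
  have hHz : H *ᵥ z = g := by
    rw [mulVec_mulVec, mul_nonsing_inv _ ((isUnit_iff_isUnit_det H).mp hH.isUnit), one_mulVec]
  have hsymm : z ⬝ᵥ H *ᵥ d = g ⬝ᵥ d := by
    rw [dotProduct_mulVec, ← mulVec_transpose, ← conjTranspose_eq_transpose_of_trivial,
      hH.isHermitian.eq, hHz, dotProduct_comm]
  have hnonneg := hH.posSemidef.dotProduct_mulVec_nonneg (d + z)
  rw [star_trivial, mulVec_add, hHz, dotProduct_add, add_dotProduct, add_dotProduct, hsymm,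
    dotProduct_comm d g, dotProduct_comm z g] at hnonneg
  linarith

theorem dotProduct_neg_inv_mulVec_add_half {H : Matrix ι ι ℝ} (hH : IsUnit H.det) (g : ι → ℝ) :
    g ⬝ᵥ -(H⁻¹ *ᵥ g) + 1 / 2 * (-(H⁻¹ *ᵥ g) ⬝ᵥ H *ᵥ -(H⁻¹ *ᵥ g))
      = -(1 / 2 * (g ⬝ᵥ H⁻¹ *ᵥ g)) := by
  rw [mulVec_neg, mulVec_mulVec, mul_nonsing_inv _ hH, one_mulVec, neg_dotProduct,
    dotProduct_neg, dotProduct_neg, dotProduct_comm (H⁻¹ *ᵥ g)]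
  ring

end Matrix

theorem stmt_13_general {r n : ℕ}
    (F : Matrix (Fin r) (Fin n) ℝ) (A : Matrix (Fin n) (Fin n) ℝ)
    (hAF : A = Fᵀ * F)
    (x : Fin n → ℝ) (hx : A.mulVec x ≠ 0)
    (ρ : ℝ) (hρ : 1 ≤ ρ)
    (v : EuclideanSpace ℝ (Fin r))
    (hvFx : v ⬝ᵥ F.mulVec x = 0)
    (σ : ℝ)
    (hσdef : σ = 1 - v ⬝ᵥ (F * Fᵀ).mulVec v / (2 * Real.sqrt (x ⬝ᵥ A.mulVec x)))
    (hσ : 0 < σ)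
    (H : Matrix (Fin n) (Fin n) ℝ)
    (hHdef : H = (2 : ℝ) • (1 : Matrix (Fin n) (Fin n) ℝ)
        - (Real.sqrt (x ⬝ᵥ A.mulVec x))⁻¹ • vecMulVec (Fᵀ.mulVec v) (Fᵀ.mulVec v))
    (g : Fin n → ℝ)
    (hgdef : g = (2 : ℝ) • x - (Real.sqrt (x ⬝ᵥ A.mulVec x))⁻¹ • A.mulVec x)
    (q : Fin r → ℝ) (hqdef : q = F.mulVec (A.mulVec x))
    (B : Matrix (Fin r) (Fin r) ℝ) (hBdef : B = vecMulVec q q)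
    (C : Matrix (Fin r) (Fin r) ℝ)
    (hCdef : C = ρ • (1 : Matrix (Fin r) (Fin r) ℝ)
        - (2 * Real.sqrt (x ⬝ᵥ A.mulVec x))⁻¹ • (F * Fᵀ)) :
    g ⬝ᵥ (H⁻¹.mulVec g)
      = (1 / 2) * ‖toEuc g‖ ^ 2
        + (v ⬝ᵥ q) ^ 2 / (4 * σ * Real.sqrt (x ⬝ᵥ A.mulVec x) ^ 3) ∧
    (∀ d : Fin n → ℝ,
      -((1 / 2) * (g ⬝ᵥ (H⁻¹.mulVec g))) ≤ g ⬝ᵥ d + (1 / 2) * (d ⬝ᵥ H.mulVec d)) ∧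
    (g ⬝ᵥ (-(H⁻¹.mulVec g)) + (1 / 2) * ((-(H⁻¹.mulVec g)) ⬝ᵥ H.mulVec (-(H⁻¹.mulVec g)))
      = -((1 / 2) * (g ⬝ᵥ (H⁻¹.mulVec g)))) ∧
    (‖v‖ ^ 2 = 1 / ρ →
      g ⬝ᵥ (H⁻¹.mulVec g)
        = (1 / 2) * ‖toEuc g‖ ^ 2
          + (1 / (4 * Real.sqrt (x ⬝ᵥ A.mulVec x) ^ 3))
            * ((v ⬝ᵥ B.mulVec v) / (v ⬝ᵥ C.mulVec v))) := by
  set s := √(x ⬝ᵥ A.mulVec x)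
  have hs : 0 < s := Real.sqrt_pos.mpr (hAF ▸ dotProduct_transpose_mul_self_mulVec_pos (hAF ▸ hx))
  set u := Fᵀ *ᵥ v with hu
  have huu : u ⬝ᵥ u = v ⬝ᵥ (F * Fᵀ) *ᵥ v := by
    simpa only [transpose_transpose] using (dotProduct_transpose_mul_self_mulVec Fᵀ v v).symm
  have hden : 2 - s⁻¹ * (u ⬝ᵥ u) = 2 * σ := by
    rw [hσdef, huu]
    field_simp
  have hug : u ⬝ᵥ g = -(s⁻¹ * (v ⬝ᵥ q)) := by
    rw [hgdef, hqdef, hu, mulVec_transpose, dotProduct_sub, dotProduct_smul, dotProduct_smul,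
      ← dotProduct_mulVec, ← dotProduct_mulVec, hvFx]
    simp
  have hH : H.PosDef := hHdef ▸
    posDef_smul_one_sub_smul_vecMulVec_self u (inv_nonneg.mpr hs.le) (by linarith)
  have hquad : g ⬝ᵥ H⁻¹ *ᵥ g
      = 1 / 2 * ‖toEuc g‖ ^ 2 + (v ⬝ᵥ q) ^ 2 / (4 * σ * s ^ 3) := by
    rw [hHdef, dotProduct_inv_smul_one_sub_smul_vecMulVec_self_mulVec u g two_ne_zero
      (by rw [hden]; positivity), hden, hug, norm_toEuc_sq]
    field_simp
    ring
  refine ⟨hquad, hH.neg_half_dotProduct_inv_mulVec_le g,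
    dotProduct_neg_inv_mulVec_add_half ((isUnit_iff_isUnit_det H).mp hH.isUnit) g, fun hv => ?_⟩
  have hvv : v ⬝ᵥ v = 1 / ρ := by
    rw [← hv, ← norm_toEuc_sq]
    rfl
  have hCv : v ⬝ᵥ C *ᵥ v = σ := by
    rw [hCdef, sub_mulVec, smul_mulVec, one_mulVec, smul_mulVec, dotProduct_sub, dotProduct_smul,
      dotProduct_smul, smul_eq_mul, smul_eq_mul, hvv, hσdef]
    field_simp
  rw [hquad, hBdef, dotProduct_vecMulVec_mulVec, dotProduct_comm q v, hCv]
  ring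

/-- Let `A = FᵀF`, `x` with `A x ≠ 0`, and `v` with `vᵀF x = 0` and
`σ := 1 − vᵀF Fᵀv/(2(xᵀAx)^{1/2}) > 0`. With `H = 2I − (Fᵀv)(Fᵀv)ᵀ/(xᵀAx)^{1/2}` and
`g = ∇f(x) = 2x − Ax/(xᵀAx)^{1/2}`, the optimal decrease of the quadratic surrogate
satisfies `gᵀ H⁻¹ g = (1/2)‖g‖² + (vᵀF FᵀF x)²/(4σ (xᵀAx)^{3/2})`; moreover
`min_d {gᵀd + (1/2)dᵀHd} = −(1/2) gᵀH⁻¹g`, attained at `d = −H⁻¹g`, and over `v` with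
`vᵀF x = 0`, `‖v‖² = 1/ρ`, the decrease equals
`(1/2)‖g‖² + (1/(4(xᵀAx)^{3/2})) (vᵀBv)/(vᵀCv)` with `B = q qᵀ`, `q = F FᵀF x`,
`C = ρI − F Fᵀ/(2(xᵀAx)^{1/2})`; hence maximizing the surrogate decrease over `Ω` is
equivalent to maximizing the generalized Rayleigh quotient `(vᵀBv)/(vᵀCv)`. -/
theorem stmt_13 {r n : ℕ} (hn : 0 < n)
    (F : Matrix (Fin r) (Fin n) ℝ) (A : Matrix (Fin n) (Fin n) ℝ)
    (hAF : A = Fᵀ * F)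
    (x : Fin n → ℝ) (hx : A.mulVec x ≠ 0)
    (ρ : ℝ) (hρ : 1 ≤ ρ)
    (v : EuclideanSpace ℝ (Fin r))
    (hvFx : v ⬝ᵥ F.mulVec x = 0)
    (σ : ℝ)
    (hσdef : σ = 1 - v ⬝ᵥ (F * Fᵀ).mulVec v / (2 * Real.sqrt (x ⬝ᵥ A.mulVec x)))
    (hσ : 0 < σ)
    (H : Matrix (Fin n) (Fin n) ℝ)
    (hHdef : H = (2 : ℝ) • (1 : Matrix (Fin n) (Fin n) ℝ)
        - (Real.sqrt (x ⬝ᵥ A.mulVec x))⁻¹ • vecMulVec (Fᵀ.mulVec v) (Fᵀ.mulVec v))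
    (g : Fin n → ℝ)
    (hgdef : g = (2 : ℝ) • x - (Real.sqrt (x ⬝ᵥ A.mulVec x))⁻¹ • A.mulVec x)
    (q : Fin r → ℝ) (hqdef : q = F.mulVec (A.mulVec x))
    (B : Matrix (Fin r) (Fin r) ℝ) (hBdef : B = vecMulVec q q)
    (C : Matrix (Fin r) (Fin r) ℝ)
    (hCdef : C = ρ • (1 : Matrix (Fin r) (Fin r) ℝ)
        - (2 * Real.sqrt (x ⬝ᵥ A.mulVec x))⁻¹ • (F * Fᵀ)) :
    g ⬝ᵥ (H⁻¹.mulVec g)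
      = (1 / 2) * ‖toEuc g‖ ^ 2
        + (v ⬝ᵥ q) ^ 2 / (4 * σ * Real.sqrt (x ⬝ᵥ A.mulVec x) ^ 3) ∧
    (∀ d : Fin n → ℝ,
      -((1 / 2) * (g ⬝ᵥ (H⁻¹.mulVec g))) ≤ g ⬝ᵥ d + (1 / 2) * (d ⬝ᵥ H.mulVec d)) ∧
    (g ⬝ᵥ (-(H⁻¹.mulVec g)) + (1 / 2) * ((-(H⁻¹.mulVec g)) ⬝ᵥ H.mulVec (-(H⁻¹.mulVec g)))
      = -((1 / 2) * (g ⬝ᵥ (H⁻¹.mulVec g)))) ∧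
    (‖v‖ ^ 2 = 1 / ρ →
      g ⬝ᵥ (H⁻¹.mulVec g)
        = (1 / 2) * ‖toEuc g‖ ^ 2
          + (1 / (4 * Real.sqrt (x ⬝ᵥ A.mulVec x) ^ 3))
            * ((v ⬝ᵥ B.mulVec v) / (v ⬝ᵥ C.mulVec v))) :=
  stmt_13_general F A hAF x hx ρ hρ v hvFx σ hσdef hσ H hHdef g hgdef q hqdef B hBdef C hCdef
end

section
/- Let A be an n×n real symmetric matrix with orthonormal eigenvectors u₁,…,uₙ and eigenvalues λ₁ > λ₂ ≥ ⋯ ≥ λₙ ≥ 0. Let (ζ_k) and (ω_k) be real sequences with ζ_k + ω_k λ₁ ≠ 0 for all k, let x₀ ∈ ℝⁿ with ‖x₀‖ = 1 and u₁ᵀx₀ ≠ 0, and define x_{k+1} = ζ_k A x_k + ω_k A² x_k. Define θ_k ∈ [0, π/2] by cos θ_k = |u₁ᵀx_k|/‖x_k‖. Suppose there is δ ∈ [0,1] such that |ζ_k + ω_k λ_j| ≤ δ |ζ_k + ω_k λ₁| for all j = 2,…,n and all k. Then for all k ≥ 0, sin θ_k ≤ tan θ₀ · (λ₂/λ₁)^k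 · δ^k. -/
/-!
In the eigenbasis the iteration is diagonal: at step `k` the coordinate `⟪u i, x⟫` is multiplied
by `λ_i (ζ_k + ω_k λ_i)`. So every ratio `⟪u i, x_k⟫ / ⟪u 0, x_k⟫` with `i ≠ 0` shrinks at least
by the factor `(λ₂/λ₁) δ` per step, hence so does `tan θ_k`, the Euclidean norm of these ratios,
and `sin θ_k ≤ tan θ_k`.
-/

open Matrix RealInnerProductSpace

open Finset

section Tangent

variable {ι E : Type*} [Fintype ι] [DecidableEq ι] [NormedAddCommGroup E] [InnerProductSpace ℝ E]
  (b : OrthonormalBasis ι ℝ E) (i₀ : ι)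

/-- The tangent of the angle between `y` and the line `ℝ ∙ b i₀` (junk value `0` when
`y ⟂ b i₀`). -/
noncomputable def tanAngle (y : E) : ℝ :=
  √(∑ i ∈ univ.erase i₀, (⟪b i, y⟫ / ⟪b i₀, y⟫) ^ 2)

theorem tanAngle_eq (y : E) :
    tanAngle b i₀ y = √(‖y‖ ^ 2 - ⟪b i₀, y⟫ ^ 2) / |⟪b i₀, y⟫| := by
  rw [tanAngle, ← b.sum_sq_inner_right y, ← add_sum_erase _ _ (mem_univ i₀),
    add_sub_cancel_left, ← Real.sqrt_sq_eq_abs, ← Real.sqrt_div' _ (sq_nonneg _), sum_div]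
  simp_rw [div_pow]

theorem sqrt_one_sub_div_sq_le_tanAngle {y : E} (hy : ⟪b i₀, y⟫ ≠ 0) :
    √(1 - (|⟪b i₀, y⟫| / ‖y‖) ^ 2) ≤ tanAngle b i₀ y := by
  have hle : |⟪b i₀, y⟫| ≤ ‖y‖ := by
    simpa [b.orthonormal.1 i₀] using abs_real_inner_le_norm (b i₀) y
  have hpos : 0 < |⟪b i₀, y⟫| := abs_pos.mpr hy
  have hsin : 1 - (|⟪b i₀, y⟫| / ‖y‖) ^ 2 = (‖y‖ ^ 2 - ⟪b i₀, y⟫ ^ 2) / ‖y‖ ^ 2 := by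
    field_simp [(hpos.trans_le hle).ne']
    rw [sq_abs]
  rw [tanAngle_eq, hsin, Real.sqrt_div' _ (sq_nonneg _), Real.sqrt_sq (norm_nonneg y)]
  exact div_le_div_of_nonneg_left (Real.sqrt_nonneg _) hpos hle

theorem tanAngle_of_norm_eq_one {y : E} (hy : ‖y‖ = 1) :
    tanAngle b i₀ y = √(1 - |⟪b i₀, y⟫| ^ 2) / |⟪b i₀, y⟫| := by
  rw [tanAngle_eq, hy, one_pow, sq_abs]

theorem tanAngle_le_mul {y z : E} {r : ℝ} (hr : 0 ≤ r)
    (h : ∀ i ≠ i₀, |⟪b i, y⟫ / ⟪b i₀, y⟫| ≤ r * |⟪b i, z⟫ / ⟪b i₀, z⟫|) :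
    tanAngle b i₀ y ≤ r * tanAngle b i₀ z := by
  rw [tanAngle, tanAngle, ← Real.sqrt_sq hr, ← Real.sqrt_mul (sq_nonneg r), mul_sum]
  gcongr with i hi
  rw [← mul_pow, sq_le_sq, abs_mul, abs_of_nonneg hr]
  exact h i (ne_of_mem_erase hi)

end Tangent

theorem abs_div_le_pow_mul_abs_div {a b μ ν : ℕ → ℝ} {q : ℝ} (hq : 0 ≤ q)
    (ha : ∀ k, a (k + 1) = μ k * a k) (hb : ∀ k, b (k + 1) = ν k * b k)
    (hμν : ∀ k, |μ k| ≤ q * |ν k|) (k : ℕ) : |a k / b k| ≤ q ^ k * |a 0 / b 0| := by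
  induction k with
  | zero => rw [pow_zero, one_mul]
  | succ k ih =>
    have hstep : |μ k / ν k| ≤ q := by
      rw [abs_div]
      exact div_le_of_le_mul₀ (abs_nonneg _) hq (hμν k)
    calc |a (k + 1) / b (k + 1)| = |μ k / ν k| * |a k / b k| := by
          rw [ha, hb, mul_div_mul_comm, abs_mul]
      _ ≤ q * (q ^ k * |a 0 / b 0|) := mul_le_mul hstep ih (abs_nonneg _) hq
      _ = q ^ (k + 1) * |a 0 / b 0| := by ring

theorem abs_mul_le_div_mul_mul_abs_mul {l l₀ l₁ s s₀ δ : ℝ} (hl : |l| ≤ l₁) (hl₀ : 0 < l₀)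
    (hs : |s| ≤ δ * |s₀|) : |l * s| ≤ l₁ / l₀ * δ * |l₀ * s₀| := by
  calc |l * s| = |l| * |s| := abs_mul l s
    _ ≤ l₁ * (δ * |s₀|) := mul_le_mul hl hs (abs_nonneg s) ((abs_nonneg l).trans hl)
    _ = l₁ / l₀ * δ * |l₀ * s₀| := by
      rw [abs_mul, abs_of_pos hl₀]
      field_simp

section SplitMerge

variable {n : ℕ} {A : Matrix (Fin n) (Fin n) ℝ} {v : EuclideanSpace ℝ (Fin n)} {μ : ℝ}

theorem inner_toEuc_mulVec_of_eigen (hA : A.IsSymm) (hv : toEuc (A *ᵥ v) = μ • v)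
    (y : EuclideanSpace ℝ (Fin n)) : ⟪v, toEuc (A *ᵥ y)⟫ = μ * ⟪v, y⟫ := by
  have hsymm := isSymmetric_toEuclideanLin_iff.mpr (isHermitian_iff_isSymm.mpr hA)
  calc ⟪v, toEuc (A *ᵥ y)⟫ = ⟪toEuc (A *ᵥ v), y⟫ := (hsymm v y).symm
    _ = μ * ⟪v, y⟫ := by rw [hv, real_inner_smul_left]

theorem inner_splitMerge_of_eigen (hA : A.IsSymm) (hv : toEuc (A *ᵥ v) = μ • v)
    (ζ ω : ℝ) (y : EuclideanSpace ℝ (Fin n)) :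
    ⟪v, ζ • toEuc (A *ᵥ y) + ω • toEuc (A *ᵥ (A *ᵥ y))⟫ = μ * (ζ + ω * μ) * ⟪v, y⟫ := by
  have hA2 : ⟪v, toEuc (A *ᵥ (A *ᵥ y))⟫ = μ * ⟪v, toEuc (A *ᵥ y)⟫ :=
    inner_toEuc_mulVec_of_eigen hA hv (toEuc (A *ᵥ y))
  rw [inner_add_right, real_inner_smul_right, real_inner_smul_right, hA2,
    inner_toEuc_mulVec_of_eigen hA hv]
  ring

end SplitMerge

/-- Convergence of the (unnormalized) Split-Merge iteration
`x_{k+1} = ζ_k A x_k + ω_k A² x_k`: if `A` is symmetric PSD with orthonormal eigenvectors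
`u i` and eigenvalues `λ 0 > λ 1 ≥ ⋯ ≥ λ (n-1) ≥ 0`, `ζ_k + ω_k λ₁ ≠ 0`, `‖x₀‖ = 1`,
`u₁ᵀx₀ ≠ 0`, and `|ζ_k + ω_k λ_j| ≤ δ |ζ_k + ω_k λ₁|` for all `j ≥ 2` and some
`δ ∈ [0,1]`, then `sin θ_k ≤ tan θ₀ (λ₂/λ₁)^k δ^k`, where
`cos θ_k = |u₁ᵀx_k|/‖x_k‖`. -/
theorem stmt_17 {n : ℕ} (hn : 2 ≤ n)
    (A : Matrix (Fin n) (Fin n) ℝ) (hsymm : A.IsSymm)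
    (lam : Fin n → ℝ) (u : Fin n → EuclideanSpace ℝ (Fin n))
    (horth : Orthonormal ℝ u)
    (heig : ∀ i, toEuc (A.mulVec (u i)) = lam i • u i)
    (hanti : ∀ i j : Fin n, i ≤ j → lam j ≤ lam i)
    (hnonneg : ∀ i, 0 ≤ lam i)
    (hgap : lam ⟨1, by omega⟩ < lam ⟨0, by omega⟩)
    (ζ ω : ℕ → ℝ)
    (hnz : ∀ k, ζ k + ω k * lam ⟨0, by omega⟩ ≠ 0)
    (x : ℕ → EuclideanSpace ℝ (Fin n))
    (hx0norm : ‖x 0‖ = 1)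
    (hx0 : ⟪u ⟨0, by omega⟩, x 0⟫ ≠ 0)
    (hrec : ∀ k, x (k + 1)
      = ζ k • toEuc (A.mulVec (x k)) + ω k • toEuc (A.mulVec (A.mulVec (x k))))
    (δ : ℝ) (hδ0 : 0 ≤ δ)
    (hbound : ∀ k, ∀ j : Fin n, j ≠ ⟨0, by omega⟩ →
      |ζ k + ω k * lam j| ≤ δ * |ζ k + ω k * lam ⟨0, by omega⟩|) :
    ∀ k, Real.sqrt (1 - (|⟪u ⟨0, by omega⟩, x k⟫| / ‖x k‖) ^ 2)
      ≤ (Real.sqrt (1 - |⟪u ⟨0, by omega⟩, x 0⟫| ^ 2) / |⟪u ⟨0, by omega⟩, x 0⟫|)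
        * (lam ⟨1, by omega⟩ / lam ⟨0, by omega⟩) ^ k * δ ^ k := by
  set i₀ : Fin n := ⟨0, by omega⟩
  set i₁ : Fin n := ⟨1, by omega⟩
  have hlam₀ : 0 < lam i₀ := (hnonneg i₁).trans_lt hgap
  have hq : 0 ≤ lam i₁ / lam i₀ * δ := by have := hnonneg i₁; positivity
  let b := OrthonormalBasis.mk horth
    (horth.linearIndependent.span_eq_top_of_card_eq_finrank' (by simp)).ge
  have hb : ⇑b = u := OrthonormalBasis.coe_mk _ _
  have hcoef : ∀ i k, ⟪u i, x (k + 1)⟫ = lam i * (ζ k + ω k * lam i) * ⟪u i, x k⟫ :=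
    fun i k => by rw [hrec]; exact inner_splitMerge_of_eigen hsymm (heig i) _ _ _
  have hc₀ : ∀ k, ⟪u i₀, x k⟫ ≠ 0 := by
    intro k
    induction k with
    | zero => exact hx0
    | succ k ih => rw [hcoef]; exact mul_ne_zero (mul_ne_zero hlam₀.ne' (hnz k)) ih
  have hratio : ∀ k, ∀ i ≠ i₀, |⟪b i, x k⟫ / ⟪b i₀, x k⟫|
      ≤ (lam i₁ / lam i₀ * δ) ^ k * |⟪b i, x 0⟫ / ⟪b i₀, x 0⟫| := by
    intro k i hi
    have hlam : |lam i| ≤ lam i₁ := by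
      rw [abs_of_nonneg (hnonneg i)]
      exact hanti i₁ i (by rw [Fin.le_def]; exact Nat.one_le_iff_ne_zero.mpr (Fin.val_ne_of_ne hi))
    rw [hb]
    exact abs_div_le_pow_mul_abs_div (a := fun k => ⟪u i, x k⟫) (b := fun k => ⟪u i₀, x k⟫) hq
      (hcoef i) (hcoef i₀)
      (fun k => abs_mul_le_div_mul_mul_abs_mul hlam hlam₀ (hbound k i hi)) k
  intro k
  calc _ ≤ tanAngle b i₀ (x k) := by
        simpa only [hb] using sqrt_one_sub_div_sq_le_tanAngle b i₀ (hb ▸ hc₀ k)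
    _ ≤ (lam i₁ / lam i₀ * δ) ^ k * tanAngle b i₀ (x 0) :=
        tanAngle_le_mul b i₀ (pow_nonneg hq k) (hratio k)
    _ = _ := by rw [tanAngle_of_norm_eq_one b i₀ hx0norm, hb, mul_pow]; ring
end
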